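/- arXiv:1103.0726 — 4 statements merged into one kernel-verified Lean document; each statement's English description precedes it below -/
import Mathlib

section
/- Let H > 0 and α > 1. There exists a constant C_{H,α} > 0 such that for every f ∈ C¹([0,H]), ∫₀^H y^{α−2} f(y)² dy ≤ C_{H,α} ∫₀^H y^α (f(y)² + f'(y)²) dy. -/
/-!
Integrating `(y ^ (α - 1) f²)' = (α - 1) y ^ (α - 2) f² + 2 y ^ (α - 1) f f'` over `[0, H]` (the
boundary term at `0` vanishes since `α > 1`) expresses `(α - 1) ∫ y ^ (α - 2) f²` through the
boundary value `H ^ (α - 1) f(H)²` and a cross term. Young's inequality with weight `(α - 1) / 2`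
absorbs half of the left side into the cross term, leaving `∫ y ^ α f'²`. Finally `f(H)²` is
bounded by the unweighted `H¹` norm of `f` on `[H/2, H]`, where `y ^ α ≥ (H/2) ^ α`.
-/

open MeasureTheory Set intervalIntegral

lemma intervalIntegrable_rpow_mul {p a b : ℝ} {g : ℝ → ℝ} (hp : -1 < p) (hab : a ≤ b)
    (hg : ContinuousOn g (Icc a b)) :
    IntervalIntegrable (fun y => y ^ p * g y) volume a b :=
  (intervalIntegrable_rpow' hp).mul_continuousOn (by rwa [uIcc_of_le hab])

lemma neg_two_mul_le_mul_sq_add_inv_mul_sq {ε : ℝ} (hε : 0 < ε) (s t : ℝ) :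
    -(2 * s * t) ≤ ε * s ^ 2 + ε⁻¹ * t ^ 2 := by
  have key : 0 ≤ ε⁻¹ * (ε * s + t) ^ 2 := by positivity
  have expand : ε⁻¹ * (ε * s + t) ^ 2 = ε * s ^ 2 + 2 * s * t + ε⁻¹ * t ^ 2 := by
    field_simp
    ring
  linarith

lemma neg_rpow_mul_two_mul_le {α ε y : ℝ} (hε : 0 < ε) (hy : 0 < y) (s t : ℝ) :
    -(y ^ (α - 1) * (2 * s * t)) ≤ ε * (y ^ (α - 2) * s ^ 2) + ε⁻¹ * (y ^ α * t ^ 2) := by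
  have hprod : y ^ (α / 2 - 1) * y ^ (α / 2) = y ^ (α - 1) := by
    rw [← Real.rpow_add hy]; ring_nf
  have hsq (c : ℝ) : (y ^ (c / 2)) ^ 2 = y ^ c := by
    rw [← Real.rpow_mul_natCast hy.le]; norm_num
  have hsq' : (y ^ (α / 2 - 1)) ^ 2 = y ^ (α - 2) := by
    rw [show α / 2 - 1 = (α - 2) / 2 by ring, hsq]
  have hyoung := neg_two_mul_le_mul_sq_add_inv_mul_sq hε (y ^ (α / 2 - 1) * s) (y ^ (α / 2) * t)
  rw [mul_pow, mul_pow, hsq', hsq] at hyoung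
  rw [← hprod]
  linarith

lemma integral_deriv_rpow_mul_eq {p H : ℝ} {g g' : ℝ → ℝ} (hp : 0 < p) (hH : 0 ≤ H)
    (hg : ContinuousOn g (Icc 0 H)) (hg' : ContinuousOn g' (Icc 0 H))
    (hderiv : ∀ y ∈ Ioo 0 H, HasDerivAt g (g' y) y) :
    p * (∫ y in 0..H, y ^ (p - 1) * g y) + ∫ y in 0..H, y ^ p * g' y = H ^ p * g H := by
  have hint₁ := (intervalIntegrable_rpow_mul (p := p - 1) (by linarith) hH hg).const_mul p
  have hint₂ := intervalIntegrable_rpow_mul (p := p) (by linarith) hH hg'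
  rw [← intervalIntegral.integral_const_mul, ← integral_add hint₁ hint₂]
  have hweight : ContinuousOn (fun y : ℝ => y ^ p) (Icc 0 H) := fun y _ =>
    (Real.continuousAt_rpow_const y p (Or.inr hp.le)).continuousWithinAt
  rw [integral_eq_sub_of_hasDerivAt_of_le hH (hweight.mul hg)
    (fun y hy => ?_) (hint₁.add hint₂)]
  · simp [Real.zero_rpow hp.ne']
  · rw [← mul_assoc]
    exact (Real.hasDerivAt_rpow_const (Or.inl hy.1.ne')).fun_mul (hderiv y hy)

section

variable {f f' : ℝ → ℝ} {a b H α : ℝ}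

lemma sq_right_le_sq_add_integral (hf : ContinuousOn f (Icc a b))
    (hf' : ContinuousOn f' (Icc a b)) (hderiv : ∀ x ∈ Ioo a b, HasDerivAt f (f' x) x)
    {y : ℝ} (hy : y ∈ Icc a b) :
    f b ^ 2 ≤ f y ^ 2 + ∫ x in a..b, (f x ^ 2 + f' x ^ 2) := by
  have hsub : Icc y b ⊆ Icc a b := Icc_subset_Icc_left hy.1
  have hcont : ContinuousOn (fun x => f x ^ 2 + f' x ^ 2) (Icc a b) :=
    (hf.fun_pow 2).add (hf'.fun_pow 2)
  have hftc : ∫ x in y..b, 2 * f x * f' x = f b ^ 2 - f y ^ 2 := by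
    apply integral_eq_sub_of_hasDerivAt_of_le hy.2 ((hf.mono hsub).fun_pow 2)
    · intro x hx
      simpa using (hderiv x ⟨hy.1.trans_lt hx.1, hx.2⟩).fun_pow 2
    · exact (((continuousOn_const.mul hf).mul hf').mono hsub).intervalIntegrable_of_Icc hy.2
  calc f b ^ 2 = f y ^ 2 + ∫ x in y..b, 2 * f x * f' x := by rw [hftc]; ring
    _ ≤ f y ^ 2 + ∫ x in y..b, (f x ^ 2 + f' x ^ 2) := by
      gcongr
      exact integral_mono_on hy.2
        (((continuousOn_const.mul hf).mul hf').mono hsub |>.intervalIntegrable_of_Icc hy.2)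
        ((hcont.mono hsub).intervalIntegrable_of_Icc hy.2) fun x _ => two_mul_le_add_sq _ _
    _ ≤ f y ^ 2 + ∫ x in a..b, (f x ^ 2 + f' x ^ 2) := by
      gcongr
      exact integral_mono_interval hy.1 hy.2 le_rfl (ae_of_all _ fun x => by positivity)
        (hcont.intervalIntegrable_of_Icc (hy.1.trans hy.2))

lemma sq_right_le_mul_integral (hab : a < b) (hf : ContinuousOn f (Icc a b))
    (hf' : ContinuousOn f' (Icc a b)) (hderiv : ∀ x ∈ Ioo a b, HasDerivAt f (f' x) x) :
    f b ^ 2 ≤ (1 / (b - a) + 1) * ∫ x in a..b, (f x ^ 2 + f' x ^ 2) := by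
  set D := ∫ x in a..b, (f x ^ 2 + f' x ^ 2)
  have hsq : IntervalIntegrable (fun x => f x ^ 2) volume a b :=
    (hf.fun_pow 2).intervalIntegrable_of_Icc hab.le
  have hsum : IntervalIntegrable (fun x => f x ^ 2 + f' x ^ 2) volume a b :=
    ((hf.fun_pow 2).add (hf'.fun_pow 2)).intervalIntegrable_of_Icc hab.le
  have havg : (b - a) * f b ^ 2 ≤ D + (b - a) * D :=
    calc (b - a) * f b ^ 2 = ∫ _ in a..b, f b ^ 2 := by simp
      _ ≤ ∫ x in a..b, (f x ^ 2 + D) :=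
        integral_mono_on hab.le intervalIntegrable_const (hsq.add intervalIntegrable_const)
          fun y hy => sq_right_le_sq_add_integral hf hf' hderiv hy
      _ = (∫ x in a..b, f x ^ 2) + (b - a) * D := by
        rw [integral_add hsq intervalIntegrable_const]; simp
      _ ≤ D + (b - a) * D := by
        gcongr
        exact integral_mono_on hab.le hsq hsum fun x _ => le_add_of_nonneg_right (sq_nonneg _)
  have hba : 0 < b - a := sub_pos.2 hab
  rw [div_add_one hba.ne', div_mul_eq_mul_div, le_div_iff₀ hba]
  linarith

lemma sq_right_le_mul_integral_rpow_mul (hH : 0 < H) (hα : 0 ≤ α)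
    (hf : ContinuousOn f (Icc 0 H)) (hf' : ContinuousOn f' (Icc 0 H))
    (hderiv : ∀ x ∈ Ioo 0 H, HasDerivAt f (f' x) x) :
    f H ^ 2 ≤ (2 / H + 1) * (H / 2) ^ (-α) * ∫ y in 0..H, y ^ α * (f y ^ 2 + f' y ^ 2) := by
  have hH2 : 0 < H / 2 := by positivity
  have hH2H : H / 2 ≤ H := (half_lt_self hH).le
  have hsub : Icc (H / 2) H ⊆ Icc 0 H := Icc_subset_Icc_left hH2.le
  have hcont : ContinuousOn (fun y => f y ^ 2 + f' y ^ 2) (Icc 0 H) :=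
    (hf.fun_pow 2).add (hf'.fun_pow 2)
  have hweighted : IntervalIntegrable (fun y => y ^ α * (f y ^ 2 + f' y ^ 2)) volume 0 H :=
    intervalIntegrable_rpow_mul (by linarith) hH.le hcont
  have hweighted' : IntervalIntegrable (fun y => y ^ α * (f y ^ 2 + f' y ^ 2)) volume (H / 2) H :=
    hweighted.mono_set (by rw [uIcc_of_le hH.le, uIcc_of_le hH2H]; exact hsub)
  have htrace := sq_right_le_mul_integral (half_lt_self hH) (hf.mono hsub) (hf'.mono hsub)
    fun x hx => hderiv x ⟨hH2.trans hx.1, hx.2⟩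
  rw [show 1 / (H - H / 2) = 2 / H by field_simp; ring] at htrace
  have hpoint (y : ℝ) (hy : H / 2 ≤ y) :
      f y ^ 2 + f' y ^ 2 ≤ (H / 2) ^ (-α) * (y ^ α * (f y ^ 2 + f' y ^ 2)) := by
    have hcancel : (H / 2) ^ (-α) * (H / 2) ^ α = 1 := by
      rw [Real.rpow_neg hH2.le, inv_mul_cancel₀ (by positivity)]
    calc f y ^ 2 + f' y ^ 2 = (H / 2) ^ (-α) * (H / 2) ^ α * (f y ^ 2 + f' y ^ 2) := by
          rw [hcancel, one_mul]
      _ ≤ (H / 2) ^ (-α) * y ^ α * (f y ^ 2 + f' y ^ 2) := by gcongr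
      _ = _ := mul_assoc _ _ _
  have hcompare : ∫ y in H / 2..H, (f y ^ 2 + f' y ^ 2)
      ≤ (H / 2) ^ (-α) * ∫ y in 0..H, y ^ α * (f y ^ 2 + f' y ^ 2) :=
    calc ∫ y in H / 2..H, (f y ^ 2 + f' y ^ 2)
      _ ≤ ∫ y in H / 2..H, (H / 2) ^ (-α) * (y ^ α * (f y ^ 2 + f' y ^ 2)) :=
        integral_mono_on hH2H ((hcont.mono hsub).intervalIntegrable_of_Icc hH2H)
          (hweighted'.const_mul _) fun y hy => hpoint y hy.1
      _ = (H / 2) ^ (-α) * ∫ y in H / 2..H, y ^ α * (f y ^ 2 + f' y ^ 2) :=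
        intervalIntegral.integral_const_mul _ _
      _ ≤ (H / 2) ^ (-α) * ∫ y in 0..H, y ^ α * (f y ^ 2 + f' y ^ 2) := by
        gcongr
        refine integral_mono_interval hH2.le hH2H le_rfl ?_ hweighted
        filter_upwards [ae_restrict_mem measurableSet_Ioc] with y hy
        exact mul_nonneg (Real.rpow_nonneg hy.1.le _) (by positivity)
  calc f H ^ 2 ≤ (2 / H + 1) * ∫ y in H / 2..H, (f y ^ 2 + f' y ^ 2) := htrace
    _ ≤ (2 / H + 1) * ((H / 2) ^ (-α) * ∫ y in 0..H, y ^ α * (f y ^ 2 + f' y ^ 2)) := by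
      gcongr
    _ = _ := by ring

noncomputable def hardyConst (H α : ℝ) : ℝ :=
  2 / (α - 1) * (H ^ (α - 1) * ((2 / H + 1) * (H / 2) ^ (-α)) + 2 / (α - 1))

lemma hardyConst_pos (hH : 0 < H) (hα : 1 < α) : 0 < hardyConst H α := by
  have : 0 < α - 1 := sub_pos.2 hα
  unfold hardyConst
  positivity

theorem integral_rpow_sub_two_mul_sq_le (hH : 0 < H) (hα : 1 < α)
    (hf : ContinuousOn f (Icc 0 H)) (hf' : ContinuousOn f' (Icc 0 H))
    (hderiv : ∀ x ∈ Ioo 0 H, HasDerivAt f (f' x) x) :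
    ∫ y in 0..H, y ^ (α - 2) * f y ^ 2
      ≤ hardyConst H α * ∫ y in 0..H, y ^ α * (f y ^ 2 + f' y ^ 2) := by
  have hα1 : 0 < α - 1 := sub_pos.2 hα
  have hε : 0 < (α - 1) / 2 := by positivity
  have hcross : ContinuousOn (fun y => 2 * f y * f' y) (Icc 0 H) :=
    (continuousOn_const.mul hf).mul hf'
  have hsq : ContinuousOn (fun y => f y ^ 2) (Icc 0 H) := hf.fun_pow 2
  have hsum : ContinuousOn (fun y => f y ^ 2 + f' y ^ 2) (Icc 0 H) := hsq.add (hf'.fun_pow 2)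
  have hparts := integral_deriv_rpow_mul_eq hα1 hH.le hsq hcross
    fun y hy => by simpa using (hderiv y hy).fun_pow 2
  rw [show α - 1 - 1 = α - 2 by ring] at hparts
  set A := ∫ y in 0..H, y ^ (α - 2) * f y ^ 2
  set B := ∫ y in 0..H, y ^ α * (f y ^ 2 + f' y ^ 2)
  have hyoung : -∫ y in 0..H, y ^ (α - 1) * (2 * f y * f' y)
      ≤ (α - 1) / 2 * A + ((α - 1) / 2)⁻¹ * B := by
    have hA := intervalIntegrable_rpow_mul (p := α - 2) (by linarith) hH.le hsq
    have hB := intervalIntegrable_rpow_mul (p := α) (by linarith) hH.le hsum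
    have hI := intervalIntegrable_rpow_mul (p := α - 1) (by linarith) hH.le hcross
    rw [← intervalIntegral.integral_neg, ← intervalIntegral.integral_const_mul,
      ← intervalIntegral.integral_const_mul, ← intervalIntegral.integral_add (hA.const_mul _)
      (hB.const_mul _)]
    refine integral_mono_on_of_le_Ioo hH.le hI.neg ((hA.const_mul _).add (hB.const_mul _))
      fun y hy => (neg_rpow_mul_two_mul_le hε hy.1 (f y) (f' y)).trans ?_
    have hyα := Real.rpow_nonneg hy.1.le α
    gcongr
    exact le_add_of_nonneg_left (sq_nonneg (f y))
  have htrace := mul_le_mul_of_nonneg_left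
    (sq_right_le_mul_integral_rpow_mul (α := α) hH (by linarith) hf hf' hderiv)
    (Real.rpow_nonneg hH.le (α - 1))
  have hconst : (α - 1) / 2 * hardyConst H α
      = H ^ (α - 1) * ((2 / H + 1) * (H / 2) ^ (-α)) + ((α - 1) / 2)⁻¹ := by
    unfold hardyConst
    field_simp
  refine le_of_mul_le_mul_left ?_ hε
  rw [← mul_assoc, hconst]
  linarith

end

lemma lintegral_Ioo_ofReal_eq_ofReal_integral {g : ℝ → ℝ} {a b : ℝ} (hab : a ≤ b)
    (hg : IntervalIntegrable g volume a b) (hg0 : ∀ x ∈ Ioo a b, 0 ≤ g x) :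
    ∫⁻ x in Ioo a b, ENNReal.ofReal (g x) = ENNReal.ofReal (∫ x in a..b, g x) := by
  rw [integral_of_le hab, integral_Ioc_eq_integral_Ioo,
    ofReal_integral_eq_lintegral_ofReal (hg.1.mono_set Ioo_subset_Ioc_self)]
  exact (ae_restrict_mem measurableSet_Ioo).mono hg0

/-- Weighted Hardy-type inequality: for `H > 0` and `α > 1` there is `C_{H,α} > 0` such that
for every `f ∈ C¹([0,H])`,
`∫₀^H y^{α-2} f(y)² dy ≤ C_{H,α} ∫₀^H y^α (f(y)² + f'(y)²) dy`. -/
theorem weighted_hardy_C1 (H α : ℝ) (hH : 0 < H) (hα : 1 < α) :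
    ∃ C : ℝ, 0 < C ∧ ∀ f : ℝ → ℝ, ContDiffOn ℝ 1 f (Icc 0 H) →
      ∫⁻ y in Ioo 0 H, ENNReal.ofReal (y ^ (α - 2) * f y ^ 2)
        ≤ ENNReal.ofReal C *
            ∫⁻ y in Ioo 0 H,
              ENNReal.ofReal (y ^ α * (f y ^ 2 + derivWithin f (Icc 0 H) y ^ 2)) := by
  refine ⟨hardyConst H α, hardyConst_pos hH hα, fun f hf => ?_⟩
  set f' := derivWithin f (Icc 0 H)
  have hf' : ContinuousOn f' (Icc 0 H) := hf.continuousOn_derivWithin (uniqueDiffOn_Icc hH) le_rfl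
  have hderiv (y : ℝ) (hy : y ∈ Ioo 0 H) : HasDerivAt f (f' y) y :=
    (hf.differentiableOn one_ne_zero y (Ioo_subset_Icc_self hy)).hasDerivWithinAt.hasDerivAt
      (Icc_mem_nhds hy.1 hy.2)
  have hweight {p : ℝ} (hp : -1 < p) {g : ℝ → ℝ} (hg : ContinuousOn g (Icc 0 H))
      (hg0 : ∀ y, 0 ≤ g y) : ∫⁻ y in Ioo 0 H, ENNReal.ofReal (y ^ p * g y)
        = ENNReal.ofReal (∫ y in 0..H, y ^ p * g y) :=
    lintegral_Ioo_ofReal_eq_ofReal_integral hH.le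
      (intervalIntegrable_rpow_mul hp hH.le hg)
      fun y hy => mul_nonneg (Real.rpow_nonneg hy.1.le p) (hg0 y)
  rw [hweight (p := α - 2) (by linarith) (hf.continuousOn.fun_pow 2) fun y => sq_nonneg (f y),
    hweight (p := α) (g := fun y => f y ^ 2 + f' y ^ 2) (by linarith)
      ((hf.continuousOn.fun_pow 2).add (hf'.fun_pow 2)) fun y => by positivity,
    ← ENNReal.ofReal_mul (hardyConst_pos hH hα).le]
  exact ENNReal.ofReal_le_ofReal
    (integral_rpow_sub_two_mul_sq_le hH hα hf.continuousOn hf' hderiv)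
end

section
/- Let V be a real Hilbert space with inner product a, S ⊂ V closed under scalar multiplication, and r ∈ S ∖ {0} a global minimizer over S of v ↦ ‖ψ − v‖²_a for given ψ ∈ V. Then ‖r‖_a = a(ψ, r)/‖r‖_a = sup_{s ∈ S ∖ {0}} a(ψ, s)/‖s‖_a. -/
/-!
Along the line through `s ≠ 0`, `t ↦ ‖ψ - t • s‖²` is a quadratic whose minimum value is
`‖ψ‖² - (⟪ψ, s⟫ / ‖s‖)²`. Since `S` contains every such line, the minimal residual `‖ψ - r‖²` is
at most this value for each `s`; for `s = r` this forces `t = 1` to be the minimizing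
parameter, i.e. `‖r‖ = ⟪ψ, r⟫ / ‖r‖`, and then `‖ψ - r‖² = ‖ψ‖² - ‖r‖²` bounds every normalized
correlation by `‖r‖`.
-/

section LineMinimization

open RealInnerProductSpace

variable {V : Type*} [NormedAddCommGroup V] [InnerProductSpace ℝ V]

theorem norm_sub_smul_sq_eq_sub_add_sq {s : V} (hs : s ≠ 0) (ψ : V) (t : ℝ) :
    ‖ψ - t • s‖ ^ 2 = ‖ψ‖ ^ 2 - (⟪ψ, s⟫ / ‖s‖) ^ 2 + (t * ‖s‖ - ⟪ψ, s⟫ / ‖s‖) ^ 2 := by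
  have hs' : ‖s‖ ≠ 0 := norm_ne_zero_iff.mpr hs
  rw [norm_sub_sq_real, real_inner_smul_right, norm_smul, Real.norm_eq_abs, mul_pow, sq_abs]
  field_simp
  ring

theorem sq_le_of_forall_le_norm_sub_smul {s x : V} (hs : s ≠ 0) {ψ : V}
    (hmin : ∀ t : ℝ, ‖ψ - x‖ ≤ ‖ψ - t • s‖) :
    ‖ψ - x‖ ^ 2 ≤ ‖ψ‖ ^ 2 - (⟪ψ, s⟫ / ‖s‖) ^ 2 := by
  have hs' : ‖s‖ ≠ 0 := norm_ne_zero_iff.mpr hs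
  have hopt := norm_sub_smul_sq_eq_sub_add_sq hs ψ (⟪ψ, s⟫ / ‖s‖ ^ 2)
  have hvanish : ⟪ψ, s⟫ / ‖s‖ ^ 2 * ‖s‖ - ⟪ψ, s⟫ / ‖s‖ = 0 := by
    field_simp
    ring
  rw [hvanish, zero_pow two_ne_zero, add_zero] at hopt
  exact hopt ▸ pow_le_pow_left₀ (norm_nonneg _) (hmin _) 2

theorem norm_eq_inner_div_norm_of_forall_le_norm_sub_smul {r ψ : V} (hr : r ≠ 0)
    (hmin : ∀ t : ℝ, ‖ψ - r‖ ≤ ‖ψ - t • r‖) :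
    ‖r‖ = ⟪ψ, r⟫ / ‖r‖ := by
  have hbound := sq_le_of_forall_le_norm_sub_smul hr hmin
  have hone := norm_sub_smul_sq_eq_sub_add_sq hr ψ 1
  rw [one_smul, one_mul] at hone
  have hsq : (‖r‖ - ⟪ψ, r⟫ / ‖r‖) ^ 2 = 0 :=
    le_antisymm (by linarith) (sq_nonneg _)
  exact sub_eq_zero.mp (pow_eq_zero_iff two_ne_zero |>.mp hsq)

end LineMinimization

theorem best_one_term_approx_sup_general {V : Type*} [NormedAddCommGroup V]
    [InnerProductSpace ℝ V]
    (S : Set V) (hSsmul : ∀ (t : ℝ), ∀ s ∈ S, t • s ∈ S)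
    (ψ r : V) (hrS : r ∈ S) (hr0 : r ≠ 0)
    (hmin : ∀ s ∈ S, ‖ψ - r‖ ≤ ‖ψ - s‖) :
    ‖r‖ = (inner ℝ ψ r : ℝ) / ‖r‖ ∧
    IsGreatest ((fun s => (inner ℝ ψ s : ℝ) / ‖s‖) '' (S \ {0})) ‖r‖ := by
  have hline : ∀ s ∈ S, ∀ t : ℝ, ‖ψ - r‖ ≤ ‖ψ - t • s‖ :=
    fun s hs t => hmin _ (hSsmul t s hs)
  have heq := norm_eq_inner_div_norm_of_forall_le_norm_sub_smul hr0 (hline r hrS)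
  refine ⟨heq, ⟨r, ⟨hrS, hr0⟩, heq.symm⟩, ?_⟩
  rintro _ ⟨s, ⟨hs, hs0 : s ≠ 0⟩, rfl⟩
  have hresidual : ‖ψ - r‖ ^ 2 = ‖ψ‖ ^ 2 - ‖r‖ ^ 2 := by
    have := norm_sub_smul_sq_eq_sub_add_sq hr0 ψ 1
    rwa [one_smul, one_mul, ← heq, sub_self, zero_pow two_ne_zero, add_zero] at this
  have hs_bound := sq_le_of_forall_le_norm_sub_smul hs0 (hline s hs)
  exact abs_le_of_sq_le_sq' (by linarith) (norm_nonneg r) |>.2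

/-- Best one-term approximation from a scale-invariant dictionary captures the maximal
normalized correlation: if `r ∈ S ∖ {0}` globally minimizes `v ↦ ‖ψ − v‖` over `S`, then
`‖r‖ = ⟪ψ, r⟫/‖r‖` and `‖r‖` is the greatest value of `s ↦ ⟪ψ, s⟫/‖s‖` over `S ∖ {0}`. -/
theorem best_one_term_approx_sup {V : Type*} [NormedAddCommGroup V]
    [InnerProductSpace ℝ V] [CompleteSpace V]
    (S : Set V) (hSsmul : ∀ (t : ℝ), ∀ s ∈ S, t • s ∈ S)
    (ψ r : V) (hrS : r ∈ S) (hr0 : r ≠ 0)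
    (hmin : ∀ s ∈ S, ‖ψ - r‖ ≤ ‖ψ - s‖) :
    ‖r‖ = (inner ℝ ψ r : ℝ) / ‖r‖ ∧
    IsGreatest ((fun s => (inner ℝ ψ s : ℝ) / ‖s‖) '' (S \ {0})) ‖r‖ :=
  best_one_term_approx_sup_general S hSsmul ψ r hrS hr0 hmin
end

section
/- With H, V, a, (λ_n, e_n) as in the variational spectral theorem (V ⊂⊂ H densely, a symmetric bounded coercive, a(e_n, v) = λ_n⟨e_n, v⟩_H, (e_n) H-orthonormal basis, (e_n/√λ_n) a-orthonormal basis of V), one has for h ∈ H: h ∈ V if and only if Σ_{n} λ_n ⟨h, e_n⟩²_H < ∞. -/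
/-!
Transport `a` to a bilinear form `B` on `V`. The `e n` are `B`-orthogonal with
`B (e n) (e n) = lam n` and `B (e n) v = lam n * ⟪ι (e n), ι v⟫`. If `h = ι v`, Bessel's inequality
for the positive semidefinite form `B` bounds the partial sums of `∑ lam n * ⟪h, ι (e n)⟫ ^ 2` by
`B v v`. Conversely, with `f n = ⟪h, ι (e n)⟫`, coercivity gives
`c * ‖∑ n ∈ t, f n • e n‖ ^ 2 ≤ ∑ n ∈ t, lam n * f n ^ 2`, so `∑ f n • e n` converges in the
complete space `V` to some `v`; then `ι v` and `h` have the same expansion in the Hilbert basis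
`ι ∘ e` of `H`.
-/

namespace LinearMap.BilinForm

section Orthogonal

variable {V ι : Type*} [AddCommGroup V] [Module ℝ V] {B : LinearMap.BilinForm ℝ V} {e : ι → V}

theorem apply_sum_smul_self_of_iIsOrtho (he : B.iIsOrtho e) (s : Finset ι) (f : ι → ℝ) :
    B (∑ i ∈ s, f i • e i) (∑ i ∈ s, f i • e i) = ∑ i ∈ s, B (e i) (e i) * f i ^ 2 := by
  simp only [map_sum, map_smul, LinearMap.sum_apply, LinearMap.smul_apply, smul_eq_mul]
  refine Finset.sum_congr rfl fun i hi => ?_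
  rw [Finset.sum_eq_single_of_mem i hi fun j _ hji => by rw [he hji, mul_zero]]
  ring

theorem IsPosSemidef.sum_mul_sq_le (hB : B.IsPosSemidef) (he : B.iIsOrtho e) {v : V}
    {f : ι → ℝ} (hf : ∀ i, B (e i) v = B (e i) (e i) * f i) (s : Finset ι) :
    ∑ i ∈ s, B (e i) (e i) * f i ^ 2 ≤ B v v := by
  let S := ∑ i ∈ s, f i • e i
  have hSS : B S S = ∑ i ∈ s, B (e i) (e i) * f i ^ 2 := apply_sum_smul_self_of_iIsOrtho he s f
  have hSv : B S v = B S S := by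
    rw [hSS]
    simp only [S, map_sum, map_smul, LinearMap.sum_apply, LinearMap.smul_apply, smul_eq_mul, hf]
    exact Finset.sum_congr rfl fun i _ => by ring
  have hnonneg := hB.isNonneg.nonneg (v - S)
  simp only [map_sub, LinearMap.sub_apply, hB.isSymm.eq v S, hSv] at hnonneg
  linarith

theorem IsPosSemidef.summable_mul_sq (hB : B.IsPosSemidef) (he : B.iIsOrtho e) {v : V}
    {f : ι → ℝ} (hf : ∀ i, B (e i) v = B (e i) (e i) * f i) :
    Summable fun i => B (e i) (e i) * f i ^ 2 :=
  summable_of_sum_le (fun _ => mul_nonneg (hB.isNonneg.nonneg _) (sq_nonneg _))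
    (hB.sum_mul_sq_le he hf)

end Orthogonal

theorem summable_smul_of_coercive {V ι : Type*} [NormedAddCommGroup V] [Module ℝ V]
    [CompleteSpace V] {B : LinearMap.BilinForm ℝ V} {e : ι → V} {c : ℝ} (hc : 0 < c)
    (hcoer : ∀ u, c * ‖u‖ ^ 2 ≤ B u u) (he : B.iIsOrtho e) {f : ι → ℝ}
    (hf : Summable fun i => B (e i) (e i) * f i ^ 2) :
    Summable fun i => f i • e i := by
  rw [summable_iff_vanishing_norm]
  intro ε hε
  obtain ⟨s, hs⟩ := summable_iff_vanishing_norm.mp hf (c * ε ^ 2) (by positivity)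
  refine ⟨s, fun t ht => ?_⟩
  have hsq : c * ‖∑ i ∈ t, f i • e i‖ ^ 2 < c * ε ^ 2 := calc
    _ ≤ B (∑ i ∈ t, f i • e i) (∑ i ∈ t, f i • e i) := hcoer _
    _ = ∑ i ∈ t, B (e i) (e i) * f i ^ 2 := apply_sum_smul_self_of_iIsOrtho he t f
    _ ≤ ‖∑ i ∈ t, B (e i) (e i) * f i ^ 2‖ := Real.le_norm_self _
    _ < c * ε ^ 2 := hs t ht
  exact lt_of_pow_lt_pow_left₀ 2 hε.le (lt_of_mul_lt_mul_left hsq hc.le)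

end LinearMap.BilinForm

theorem Orthonormal.hasSum_inner_smul_of_dense {𝕜 E ι : Type*} [RCLike 𝕜] [NormedAddCommGroup E]
    [InnerProductSpace 𝕜 E] [CompleteSpace E] {v : ι → E} (hv : Orthonormal 𝕜 v)
    (hsp : Dense (Submodule.span 𝕜 (Set.range v) : Set E)) (x : E) :
    HasSum (fun i => inner 𝕜 (v i) x • v i) x := by
  let b := HilbertBasis.mk hv (Submodule.dense_iff_topologicalClosure_eq_top.mp hsp).ge
  simpa [b, HilbertBasis.repr_apply_apply, HilbertBasis.coe_mk] using b.hasSum_repr x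

theorem mem_form_domain_iff_coef_decay_general
    {H V : Type*} [NormedAddCommGroup H] [InnerProductSpace ℝ H] [CompleteSpace H]
    [NormedAddCommGroup V] [InnerProductSpace ℝ V] [CompleteSpace V]
    (ι : V →L[ℝ] H)
    (a : V → V → ℝ)
    (haddl : ∀ u v w : V, a (u + v) w = a u w + a v w)
    (hsmull : ∀ (t : ℝ) (u v : V), a (t • u) v = t * a u v)
    (hsymm : ∀ u v : V, a u v = a v u)
    (hell : ∃ c : ℝ, 0 < c ∧ ∀ u : V, c * ‖u‖ ^ 2 ≤ a u u)
    (lam : ℕ → ℝ) (e : ℕ → V)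
    (heig : ∀ n : ℕ, ∀ v : V, a (e n) v = lam n * (inner ℝ (ι (e n)) (ι v) : ℝ))
    (horthH : Orthonormal ℝ (fun n => ι (e n)))
    (hbasisH : Dense ((Submodule.span ℝ (Set.range fun n => ι (e n)) : Submodule ℝ H) : Set H)) :
    ∀ h : H, (h ∈ Set.range ι ↔ Summable (fun n => lam n * (inner ℝ h (ι (e n)) : ℝ) ^ 2)) := by
  obtain ⟨c, hc, hcoer⟩ := hell
  let B : LinearMap.BilinForm ℝ V := LinearMap.mk₂ ℝ a haddl (by simpa only [smul_eq_mul])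
    (fun u v w => by rw [hsymm, haddl, hsymm v, hsymm w])
    (fun t u v => by rw [hsymm, hsmull, hsymm, smul_eq_mul])
  have hB : B.IsPosSemidef :=
    ⟨⟨hsymm⟩, ⟨fun u => (mul_nonneg hc.le (sq_nonneg _)).trans (hcoer u)⟩⟩
  have hlam : ∀ n, B (e n) (e n) = lam n := fun n =>
    (heig n (e n)).trans (by rw [real_inner_self_eq_norm_sq, horthH.1 n, one_pow, mul_one])
  have he : B.iIsOrtho e := LinearMap.BilinForm.iIsOrtho_def.mpr fun n m hnm =>
    (heig n (e m)).trans (by rw [horthH.2 hnm, mul_zero])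
  intro h
  simp only [← hlam]
  constructor
  · rintro ⟨v, rfl⟩
    exact hB.summable_mul_sq (v := v) he fun n => by rw [hlam, real_inner_comm]; exact heig n v
  · intro hsum
    obtain ⟨v, hv⟩ := LinearMap.BilinForm.summable_smul_of_coercive hc hcoer he hsum
    refine ⟨v, (hv.mapL ι).unique ?_⟩
    simpa [real_inner_comm] using horthH.hasSum_inner_smul_of_dense hbasisH h

/-- Characterization of the form domain by coefficient decay: with `V ⊂⊂ H` densely
(embedding `ι`), `a` symmetric bounded coercive on `V`, and eigenpairs `(λ_n, e_n)` with
`a(e_n, v) = λ_n ⟨e_n, v⟩_H`, `(e_n)` an `H`-orthonormal basis and `(e_n/√λ_n)` an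
`a`-orthonormal basis of `V`, one has for `h ∈ H`:
`h ∈ V` if and only if `Σ_n λ_n ⟨h, e_n⟩²_H < ∞`. -/
theorem mem_form_domain_iff_coef_decay
    {H V : Type*} [NormedAddCommGroup H] [InnerProductSpace ℝ H] [CompleteSpace H]
    [TopologicalSpace.SeparableSpace H]
    [NormedAddCommGroup V] [InnerProductSpace ℝ V] [CompleteSpace V]
    [TopologicalSpace.SeparableSpace V]
    (ι : V →L[ℝ] H) (hinj : Function.Injective ι) (hdense : DenseRange ι)
    (hcompact : IsCompactOperator ι)
    (a : V → V → ℝ)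
    (haddl : ∀ u v w : V, a (u + v) w = a u w + a v w)
    (hsmull : ∀ (t : ℝ) (u v : V), a (t • u) v = t * a u v)
    (hsymm : ∀ u v : V, a u v = a v u)
    (hbdd : ∃ Cb : ℝ, ∀ u v : V, |a u v| ≤ Cb * ‖u‖ * ‖v‖)
    (hell : ∃ c : ℝ, 0 < c ∧ ∀ u : V, c * ‖u‖ ^ 2 ≤ a u u)
    (lam : ℕ → ℝ) (e : ℕ → V)
    (heig : ∀ n : ℕ, ∀ v : V, a (e n) v = lam n * (inner ℝ (ι (e n)) (ι v) : ℝ))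
    (hpos : ∀ n, 0 < lam n)
    (horthH : Orthonormal ℝ (fun n => ι (e n)))
    (hbasisH : Dense ((Submodule.span ℝ (Set.range fun n => ι (e n)) : Submodule ℝ H) : Set H))
    (hortha : ∀ n m : ℕ,
      a ((Real.sqrt (lam n))⁻¹ • e n) ((Real.sqrt (lam m))⁻¹ • e m)
        = if n = m then 1 else 0)
    (hbasisV : Dense ((Submodule.span ℝ (Set.range e) : Submodule ℝ V) : Set V)) :
    ∀ h : H, (h ∈ Set.range ι ↔ Summable (fun n => lam n * (inner ℝ h (ι (e n)) : ℝ) ^ 2)) :=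
  mem_form_domain_iff_coef_decay_general ι a haddl hsmull hsymm hell lam e heig horthH hbasisH
end

section
/- Let H > 0, α > 1, γ > 0, and let z : P × (0,H) → ℝ (P ⊂ ℝ^{d−1} a bounded domain) satisfy ∂_d z, ∂_{d,d} z ∈ L²_{w}(P × (0,H)) where w(p′, p_d) = p_d^α. Then there is a constant C (depending on H, α) such that for every p_d ∈ (0,H), ∫_P p_d^α |∂_d z(p′, p_d)|² dp′ ≤ C (‖∂_d z‖²_{L²_w} + ‖∂_{d,d} z‖²_{L²_w}), and consequently ∫_P |∂_d z(p′,p_d)| p_d^α dp′ → 0 as p_d → 0⁺. -/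
/-!
Fix `p'` and write `f = ∂_d z(p', ·)`. For `t ∈ (0, H)` and `s ∈ (H/2, H)`, the fundamental
theorem of calculus and the Cauchy–Schwarz inequality with weight `r ^ α` give
`(f t - f s)² ≤ (∫_{min t s}^∞ r^{-α} dr) · ∫ r^α f'² = min(t,s)^{1-α}/(α-1) · ∫ r^α f'²`,
which is finite because `α > 1`, and `t^α min(t,s)^{1-α} ≤ 2^α H` since `t ≤ 2 min(t,s)`.
Taking for `s` a point where `s^α f(s)²` is at most its mean over `(H/2, H)` bounds
`t^α f(t)²` by the weighted `H¹` norm of `f` on `(0, H)`; integrating in `p'` (Tonelli) gives the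
trace inequality. The limit follows from `|f| t^α ≤ t^{α/2} (1 + t^α f²) / 2` on the bounded set
`P`, whose right-hand side integrates to `O(t^{α/2})`.
-/

open MeasureTheory Set Filter Topology

theorem sq_lintegral_enorm_le_weighted {X : Type*} [MeasurableSpace X] {μ : Measure X}
    {g w : X → ℝ} (hg : AEMeasurable g μ) (hw : AEMeasurable w μ) (hw0 : ∀ᵐ x ∂μ, 0 < w x) :
    (∫⁻ x, ‖g x‖ₑ ∂μ) ^ 2 ≤
      (∫⁻ x, ENNReal.ofReal (w x)⁻¹ ∂μ) * ∫⁻ x, ENNReal.ofReal (g x ^ 2 * w x) ∂μ := by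
  have hsplit : ∀ᵐ x ∂μ, ‖g x‖ₑ =
      ENNReal.ofReal (w x)⁻¹ ^ (1 / 2 : ℝ) * ENNReal.ofReal (g x ^ 2 * w x) ^ (1 / 2 : ℝ) := by
    filter_upwards [hw0] with x hx
    rw [← ENNReal.mul_rpow_of_nonneg _ _ (by norm_num), ← ENNReal.ofReal_mul (by positivity),
      mul_left_comm, inv_mul_cancel₀ hx.ne', mul_one,
      ENNReal.ofReal_rpow_of_nonneg (sq_nonneg _) (by norm_num), ← Real.sqrt_eq_rpow,
      Real.sqrt_sq_eq_abs, Real.enorm_eq_ofReal_abs]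
  have holder := ENNReal.lintegral_mul_norm_pow_le hw.inv.ennreal_ofReal
    ((hg.pow_const 2).mul hw).ennreal_ofReal (p := 1 / 2) (q := 1 / 2) (by norm_num) (by norm_num)
    (by norm_num)
  simp only [Pi.inv_apply, Pi.mul_apply] at holder
  rw [← lintegral_congr_ae hsplit] at holder
  calc (∫⁻ x, ‖g x‖ₑ ∂μ) ^ 2
      ≤ ((∫⁻ x, ENNReal.ofReal (w x)⁻¹ ∂μ) ^ (1 / 2 : ℝ) *
          (∫⁻ x, ENNReal.ofReal (g x ^ 2 * w x) ∂μ) ^ (1 / 2 : ℝ)) ^ 2 := by gcongr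
    _ = _ := by
      rw [mul_pow, ← ENNReal.rpow_natCast, ← ENNReal.rpow_natCast, ← ENNReal.rpow_mul,
        ← ENNReal.rpow_mul]
      norm_num

theorem lintegral_Ioi_inv_rpow {a α : ℝ} (ha : 0 < a) (hα : 1 < α) :
    ∫⁻ r in Ioi a, ENNReal.ofReal (r ^ α)⁻¹ = ENNReal.ofReal (a ^ (1 - α) / (α - 1)) := by
  have hα' : -α < -1 := by linarith
  rw [setLIntegral_congr_fun measurableSet_Ioi (g := fun r => ENNReal.ofReal (r ^ (-α)))
      fun r hr => by dsimp only; rw [Real.rpow_neg (ha.trans hr).le],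
    ← ofReal_integral_eq_lintegral_ofReal (integrableOn_Ioi_rpow_of_lt hα' ha)
      (ae_restrict_of_forall_mem measurableSet_Ioi fun r hr =>
        (Real.rpow_pos_of_pos (ha.trans hr) _).le),
    integral_Ioi_rpow_of_lt hα' ha]
  congr 1
  rw [show -α + 1 = 1 - α by ring, ← neg_div_neg_eq, neg_neg, neg_sub]

theorem sq_enorm_sub_le_lintegral_deriv_sq_mul_rpow {f : ℝ → ℝ} {a b α : ℝ} (ha : 0 < a)
    (hb : 0 < b) (hα : 1 < α) (hf : ContDiffOn ℝ 1 f (uIcc a b)) :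
    ‖f b - f a‖ₑ ^ 2 ≤ ENNReal.ofReal (min a b ^ (1 - α) / (α - 1)) *
      ∫⁻ r in uIcc a b, ENNReal.ofReal (deriv f r ^ 2 * r ^ α) := by
  wlog hab : a ≤ b generalizing a b
  · rw [enorm_sub_rev, min_comm, uIcc_comm]
    exact this hb ha (by rwa [uIcc_comm]) (le_of_not_ge hab)
  rw [min_eq_left hab, uIcc_of_le hab] at *
  have hpos : ∀ᵐ r ∂volume.restrict (Icc a b), 0 < r ^ α :=
    ae_restrict_of_forall_mem measurableSet_Icc fun r hr =>
      Real.rpow_pos_of_pos (ha.trans_le hr.1) _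
  calc ‖f b - f a‖ₑ ^ 2 ≤ (∫⁻ r in Icc a b, ‖deriv f r‖ₑ) ^ 2 := by
        gcongr; exact enorm_sub_le_lintegral_deriv_of_contDiffOn_Icc hf hab
    _ ≤ (∫⁻ r in Icc a b, ENNReal.ofReal (r ^ α)⁻¹) *
          ∫⁻ r in Icc a b, ENNReal.ofReal (deriv f r ^ 2 * r ^ α) :=
        sq_lintegral_enorm_le_weighted (measurable_deriv f).aemeasurable (by fun_prop) hpos
    _ ≤ _ := by
        gcongr
        rw [← lintegral_Ioi_inv_rpow ha hα, setLIntegral_congr Ioi_ae_eq_Ici]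
        exact lintegral_mono_set Icc_subset_Ici_self

theorem ofReal_rpow_mul_sq_sub_le {f : ℝ → ℝ} {H α t s : ℝ} (hα : 1 < α)
    (hf : ContDiffOn ℝ 1 f (Ioo 0 H)) (ht : t ∈ Ioo 0 H) (hs : s ∈ Ioo 0 H) (hts : t ≤ 2 * s) :
    ENNReal.ofReal (t ^ α * (f t - f s) ^ 2) ≤ ENNReal.ofReal (2 ^ α * H / (α - 1)) *
      ∫⁻ r in Ioo 0 H, ENNReal.ofReal (deriv f r ^ 2 * r ^ α) := by
  have hsub : uIcc s t ⊆ Ioo 0 H := (ordConnected_Ioo).uIcc_subset hs ht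
  have hm : 0 < min s t := lt_min hs.1 ht.1
  have hcoef : t ^ α * (min s t ^ (1 - α) / (α - 1)) ≤ 2 ^ α * H / (α - 1) := by
    have htm : t ^ α ≤ 2 ^ α * min s t ^ α := by
      rw [← Real.mul_rpow zero_le_two hm.le]
      refine Real.rpow_le_rpow ht.1.le ?_ (by linarith)
      rcases min_choice s t with h | h <;> rw [h] <;> linarith [ht.1]
    have hmH : min s t ^ α * min s t ^ (1 - α) ≤ H := by
      rw [← Real.rpow_add hm, add_sub_cancel, Real.rpow_one]
      exact (min_le_left _ _).trans hs.2.le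
    rw [← mul_div_assoc]
    refine div_le_div_of_nonneg_right ?_ (by linarith)
    calc t ^ α * min s t ^ (1 - α) ≤ 2 ^ α * min s t ^ α * min s t ^ (1 - α) := by gcongr
      _ ≤ 2 ^ α * H := by rw [mul_assoc]; gcongr
  calc ENNReal.ofReal (t ^ α * (f t - f s) ^ 2)
        = ENNReal.ofReal (t ^ α) * ‖f t - f s‖ₑ ^ 2 := by
        rw [Real.enorm_eq_ofReal_abs, ← ENNReal.ofReal_pow (abs_nonneg _), sq_abs,
          ENNReal.ofReal_mul (Real.rpow_nonneg ht.1.le _)]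
    _ ≤ ENNReal.ofReal (t ^ α) * (ENNReal.ofReal (min s t ^ (1 - α) / (α - 1)) *
          ∫⁻ r in uIcc s t, ENNReal.ofReal (deriv f r ^ 2 * r ^ α)) := by
        gcongr
        exact sq_enorm_sub_le_lintegral_deriv_sq_mul_rpow hs.1 ht.1 hα (hf.mono hsub)
    _ ≤ _ := by
        rw [← mul_assoc, ← ENNReal.ofReal_mul (Real.rpow_nonneg ht.1.le _)]
        gcongr ?_ * ?_
        · exact ENNReal.ofReal_le_ofReal hcoef
        · exact lintegral_mono_set hsub

theorem exists_mem_Ioo_le_inv_mul_setLIntegral {g : ℝ → ENNReal} {a b : ℝ} (hab : a < b)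
    (hg : AEMeasurable g (volume.restrict (Ioo a b))) :
    ∃ s ∈ Ioo a b, g s ≤ ENNReal.ofReal (b - a)⁻¹ * ∫⁻ r in Ioo a b, g r := by
  have hvol : volume (Ioo a b) = ENNReal.ofReal (b - a) := Real.volume_Ioo
  obtain ⟨s, hs, hs_avg⟩ := exists_le_setLAverage (by simpa [hvol] using hab)
    (by rw [hvol]; exact ENNReal.ofReal_ne_top) hg
  refine ⟨s, hs, hs_avg.trans_eq ?_⟩
  rw [setLAverage_eq, hvol, ENNReal.div_eq_inv_mul, ENNReal.ofReal_inv_of_pos (sub_pos.2 hab)]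

theorem rpow_mul_sq_le_two_mul_add {t s α : ℝ} (x y : ℝ) (ht : 0 ≤ t) (hts : t ≤ 2 * s)
    (hα : 0 ≤ α) :
    t ^ α * x ^ 2 ≤ 2 * 2 ^ α * (y ^ 2 * s ^ α) + 2 * (t ^ α * (x - y) ^ 2) := by
  have hpow : t ^ α ≤ 2 ^ α * s ^ α := by
    rw [← Real.mul_rpow zero_le_two (by linarith)]
    exact Real.rpow_le_rpow ht hts hα
  nlinarith [sq_nonneg (x - 2 * y), Real.rpow_nonneg ht α]

theorem ofReal_rpow_mul_sq_le_lintegral {f : ℝ → ℝ} {H α t : ℝ} (hα : 1 < α)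
    (hf : ContDiffOn ℝ 1 f (Ioo 0 H)) (ht : t ∈ Ioo 0 H) :
    ENNReal.ofReal (t ^ α * f t ^ 2) ≤ ENNReal.ofReal (2 * 2 ^ α * (2 / H + H / (α - 1))) *
      ∫⁻ r in Ioo 0 H, ENNReal.ofReal (f r ^ 2 * r ^ α + deriv f r ^ 2 * r ^ α) := by
  set E := ∫⁻ r in Ioo 0 H, ENNReal.ofReal (f r ^ 2 * r ^ α + deriv f r ^ 2 * r ^ α)
  have hH : 0 < H := ht.1.trans ht.2
  have hα1 : 0 < α - 1 := sub_pos.2 hα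
  have hupper : Ioo (H / 2) H ⊆ Ioo 0 H := Ioo_subset_Ioo_left (by positivity)
  obtain ⟨s, hs, hs_mean⟩ := exists_mem_Ioo_le_inv_mul_setLIntegral
    (g := fun r => ENNReal.ofReal (f r ^ 2 * r ^ α)) (by linarith)
    (((hf.continuousOn.mono hupper).pow 2).mul
      ((continuousOn_id.rpow_const fun r hr => Or.inr (by linarith))) |>.aemeasurable
      measurableSet_Ioo).ennreal_ofReal
  have hs_le : ENNReal.ofReal (f s ^ 2 * s ^ α) ≤ ENNReal.ofReal (2 / H) * E := by
    refine hs_mean.trans ?_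
    rw [show (H - H / 2)⁻¹ = 2 / H by field_simp; ring]
    gcongr
    refine (lintegral_mono_set hupper).trans (setLIntegral_mono' measurableSet_Ioo fun r hr => ?_)
    exact ENNReal.ofReal_le_ofReal (le_add_of_nonneg_right (by have := hr.1; positivity))
  have hdiff : ENNReal.ofReal (t ^ α * (f t - f s) ^ 2) ≤
      ENNReal.ofReal (2 ^ α * H / (α - 1)) * E := by
    refine (ofReal_rpow_mul_sq_sub_le hα hf ht (hupper hs) (by linarith [hs.1, ht.2])).trans ?_
    gcongr
    refine setLIntegral_mono' measurableSet_Ioo fun r hr => ?_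
    exact ENNReal.ofReal_le_ofReal (le_add_of_nonneg_left (by have := hr.1; positivity))
  have hsplit := rpow_mul_sq_le_two_mul_add (s := s) (f t) (f s) ht.1.le
    (by linarith [hs.1, ht.2]) (by linarith : 0 ≤ α)
  calc ENNReal.ofReal (t ^ α * f t ^ 2)
      ≤ ENNReal.ofReal (2 * 2 ^ α) * ENNReal.ofReal (f s ^ 2 * s ^ α) +
          ENNReal.ofReal 2 * ENNReal.ofReal (t ^ α * (f t - f s) ^ 2) := by
        rw [← ENNReal.ofReal_mul (by positivity), ← ENNReal.ofReal_mul zero_le_two]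
        exact (ENNReal.ofReal_le_ofReal hsplit).trans ENNReal.ofReal_add_le
    _ ≤ ENNReal.ofReal (2 * 2 ^ α) * (ENNReal.ofReal (2 / H) * E) +
          ENNReal.ofReal 2 * (ENNReal.ofReal (2 ^ α * H / (α - 1)) * E) := by gcongr
    _ = _ := by
        rw [← mul_assoc, ← mul_assoc, ← add_mul, ← ENNReal.ofReal_mul (by positivity),
          ← ENNReal.ofReal_mul zero_le_two, ← ENNReal.ofReal_add (by positivity)
            (mul_nonneg zero_le_two (div_nonneg (by positivity) hα1.le))]
        congr 2
        ring

theorem lintegral_rpow_mul_sq_le_setIntegral {X : Type*} [MeasurableSpace X] {μ : Measure X}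
    [SFinite μ] {P : Set X} {u : X × ℝ → ℝ} {H α : ℝ} (hα : 1 < α) (hP : MeasurableSet P)
    (hu : ∀ p ∈ P, ContDiffOn ℝ 1 (fun t => u (p, t)) (Ioo 0 H))
    (hu_int : IntegrableOn (fun x => u x ^ 2 * x.2 ^ α) (P ×ˢ Ioo 0 H) (μ.prod volume))
    (hu'_int : IntegrableOn (fun x => deriv (fun t => u (x.1, t)) x.2 ^ 2 * x.2 ^ α)
      (P ×ˢ Ioo 0 H) (μ.prod volume))
    {t : ℝ} (ht : t ∈ Ioo 0 H) :
    ∫⁻ p in P, ENNReal.ofReal (t ^ α * u (p, t) ^ 2) ∂μ ≤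
      ENNReal.ofReal (2 * 2 ^ α * (2 / H + H / (α - 1)) *
        ((∫ x in P ×ˢ Ioo 0 H, u x ^ 2 * x.2 ^ α ∂μ.prod volume) +
          ∫ x in P ×ˢ Ioo 0 H,
            deriv (fun t => u (x.1, t)) x.2 ^ 2 * x.2 ^ α ∂μ.prod volume)) := by
  have hC : 0 ≤ 2 * 2 ^ α * (2 / H + H / (α - 1)) := by
    have := ht.1.trans ht.2
    have := sub_pos.2 hα
    positivity
  have hint : IntegrableOn
      (fun x => u x ^ 2 * x.2 ^ α + deriv (fun t => u (x.1, t)) x.2 ^ 2 * x.2 ^ α)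
      (P ×ˢ Ioo 0 H) (μ.prod volume) := hu_int.add hu'_int
  have hnonneg : 0 ≤ᵐ[(μ.prod volume).restrict (P ×ˢ Ioo 0 H)]
      fun x => u x ^ 2 * x.2 ^ α + deriv (fun t => u (x.1, t)) x.2 ^ 2 * x.2 ^ α :=
    ae_restrict_of_forall_mem (hP.prod measurableSet_Ioo) fun x hx => by
      have := hx.2.1
      positivity
  calc ∫⁻ p in P, ENNReal.ofReal (t ^ α * u (p, t) ^ 2) ∂μ
      ≤ ∫⁻ p in P, ENNReal.ofReal (2 * 2 ^ α * (2 / H + H / (α - 1))) *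
          (∫⁻ s in Ioo 0 H, ENNReal.ofReal (u (p, s) ^ 2 * s ^ α +
            deriv (fun t => u (p, t)) s ^ 2 * s ^ α)) ∂μ :=
        setLIntegral_mono' hP fun p hp => ofReal_rpow_mul_sq_le_lintegral hα (hu p hp) ht
    _ = ENNReal.ofReal (2 * 2 ^ α * (2 / H + H / (α - 1))) *
          ENNReal.ofReal (∫ x in P ×ˢ Ioo 0 H, (u x ^ 2 * x.2 ^ α +
            deriv (fun t => u (x.1, t)) x.2 ^ 2 * x.2 ^ α) ∂μ.prod volume) := by
        rw [lintegral_const_mul' _ _ ENNReal.ofReal_ne_top,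
          ofReal_integral_eq_lintegral_ofReal hint hnonneg,
          setLIntegral_prod _ hint.aemeasurable.ennreal_ofReal]
    _ = _ := by rw [integral_add hu_int hu'_int, ENNReal.ofReal_mul hC]

theorem abs_mul_rpow_le {a t α : ℝ} (ht : 0 ≤ t) :
    |a| * t ^ α ≤ t ^ (α / 2) / 2 * (1 + t ^ α * a ^ 2) := by
  have hsq : t ^ α = (t ^ (α / 2)) ^ 2 := by
    rw [← Real.rpow_natCast, ← Real.rpow_mul ht]; norm_num
  have hc : 0 ≤ t ^ (α / 2) := Real.rpow_nonneg ht _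
  rw [hsq, ← sq_abs a]
  nlinarith [mul_nonneg hc (sq_nonneg (t ^ (α / 2) * |a| - 1))]

theorem tendsto_integral_abs_mul_rpow_nhdsGT_zero {X : Type*} [MeasurableSpace X]
    {μ : Measure X} [IsFiniteMeasure μ] {F : ℝ → X → ℝ} {α H M : ℝ} (hα : 0 < α) (hH : 0 < H)
    (hF : ∀ t ∈ Ioo 0 H, ∫⁻ x, ENNReal.ofReal (t ^ α * F t x ^ 2) ∂μ ≤ ENNReal.ofReal M) :
    Tendsto (fun t => ∫ x, |F t x| * t ^ α ∂μ) (𝓝[>] 0) (𝓝 0) := by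
  set K := μ univ + ENNReal.ofReal M
  have hK : K ≠ ⊤ := ENNReal.add_ne_top.2 ⟨measure_ne_top μ univ, ENNReal.ofReal_ne_top⟩
  have hbound : ∀ t ∈ Ioo 0 H, ‖∫ x, |F t x| * t ^ α ∂μ‖ ≤ t ^ (α / 2) / 2 * K.toReal := by
    intro t ht
    have hc : 0 ≤ t ^ (α / 2) / 2 := by have := ht.1; positivity
    have hlint : ∫⁻ x, ENNReal.ofReal ‖|F t x| * t ^ α‖ ∂μ ≤
        ENNReal.ofReal (t ^ (α / 2) / 2) * K :=
      calc ∫⁻ x, ENNReal.ofReal ‖|F t x| * t ^ α‖ ∂μ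
          ≤ ∫⁻ x, ENNReal.ofReal (t ^ (α / 2) / 2) *
              (1 + ENNReal.ofReal (t ^ α * F t x ^ 2)) ∂μ := by
            refine lintegral_mono fun x => ?_
            rw [Real.norm_of_nonneg (by have := ht.1; positivity), ← ENNReal.ofReal_one,
              ← ENNReal.ofReal_add zero_le_one (by have := ht.1; positivity),
              ← ENNReal.ofReal_mul hc]
            exact ENNReal.ofReal_le_ofReal (abs_mul_rpow_le ht.1.le)
        _ ≤ ENNReal.ofReal (t ^ (α / 2) / 2) * K := by
            rw [lintegral_const_mul' _ _ ENNReal.ofReal_ne_top,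
              lintegral_add_left measurable_const, lintegral_one]
            exact mul_le_mul' le_rfl (add_le_add_right (hF t ht) _)
    calc ‖∫ x, |F t x| * t ^ α ∂μ‖ ≤ (∫⁻ x, ENNReal.ofReal ‖|F t x| * t ^ α‖ ∂μ).toReal :=
          norm_integral_le_lintegral_norm _
      _ ≤ (ENNReal.ofReal (t ^ (α / 2) / 2) * K).toReal :=
          ENNReal.toReal_mono (ENNReal.mul_ne_top ENNReal.ofReal_ne_top hK) hlint
      _ = t ^ (α / 2) / 2 * K.toReal := by rw [ENNReal.toReal_mul, ENNReal.toReal_ofReal hc]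
  have hlim : Tendsto (fun t : ℝ => t ^ (α / 2) / 2 * K.toReal) (𝓝 0) (𝓝 0) := by
    have := (((Real.continuous_rpow_const (by positivity : 0 ≤ α / 2)).div_const 2).mul_const
      K.toReal).tendsto 0
    rwa [Real.zero_rpow (by positivity), zero_div, zero_mul] at this
  refine squeeze_zero_norm' ?_ (hlim.mono_left nhdsWithin_le_nhds)
  filter_upwards [Ioo_mem_nhdsGT hH] with t ht using hbound t ht

theorem weighted_trace_inequality_general (k : ℕ) (H α : ℝ) (hH : 0 < H) (hα : 1 < α) :
    ∃ C : ℝ, 0 < C ∧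
      ∀ (P : Set (Fin k → ℝ)), IsOpen P → Bornology.IsBounded P →
      ∀ z : (Fin k → ℝ) × ℝ → ℝ, Measurable z →
      (∀ p' ∈ P, ContDiffOn ℝ 2 (fun t => z (p', t)) (Ioo 0 H)) →
      IntegrableOn (fun x => (deriv (fun t => z (x.1, t)) x.2) ^ 2 * x.2 ^ α)
        (P ×ˢ Ioo 0 H) →
      IntegrableOn (fun x => (deriv (deriv (fun t => z (x.1, t))) x.2) ^ 2 * x.2 ^ α)
        (P ×ˢ Ioo 0 H) →
      ((∀ t ∈ Ioo 0 H,
          ∫⁻ p' in P, ENNReal.ofReal (t ^ α * (deriv (fun s => z (p', s)) t) ^ 2)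
            ≤ ENNReal.ofReal (C *
                ((∫ x in P ×ˢ Ioo 0 H, (deriv (fun s => z (x.1, s)) x.2) ^ 2 * x.2 ^ α)
                  + ∫ x in P ×ˢ Ioo 0 H,
                      (deriv (deriv (fun s => z (x.1, s))) x.2) ^ 2 * x.2 ^ α))) ∧
        Tendsto (fun t : ℝ => ∫ p' in P, |deriv (fun s => z (p', s)) t| * t ^ α)
          (nhdsWithin 0 (Ioi 0)) (nhds 0)) := by
  refine ⟨2 * 2 ^ α * (2 / H + H / (α - 1)), by have := sub_pos.2 hα; positivity, ?_⟩
  intro P hP hP_bdd z _ hz hz'_int hz''_int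
  have hz' : ∀ p ∈ P, ContDiffOn ℝ 1 (deriv fun t => z (p, t)) (Ioo 0 H) := fun p hp =>
    (hz p hp).deriv_of_isOpen isOpen_Ioo (by norm_num)
  have htrace := fun t (ht : t ∈ Ioo 0 H) =>
    lintegral_rpow_mul_sq_le_setIntegral (u := fun x => deriv (fun t => z (x.1, t)) x.2) hα
      hP.measurableSet hz' hz'_int hz''_int ht
  have : IsFiniteMeasure (volume.restrict P) :=
    isFiniteMeasure_restrict.2 hP_bdd.measure_lt_top.ne
  exact ⟨htrace, tendsto_integral_abs_mul_rpow_nhdsGT_zero (by linarith) hH htrace⟩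

/-- Trace-type inequality on a half-cylinder `P × (0,H)` with power weight
`w(p′, p_d) = p_d^α`, `α > 1`: if `∂_d z` and `∂_{d,d} z` lie in `L²_w(P × (0,H))`, then
there is a constant `C` (depending only on `H` and `α`) with
`∫_P p_d^α |∂_d z(p′, p_d)|² dp′ ≤ C (‖∂_d z‖²_{L²_w} + ‖∂_{d,d} z‖²_{L²_w})`
for every `p_d ∈ (0,H)`; consequently `∫_P |∂_d z(p′,p_d)| p_d^α dp′ → 0` as `p_d → 0⁺`. -/
theorem weighted_trace_inequality (k : ℕ) (H α γ : ℝ) (hH : 0 < H) (hα : 1 < α)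
    (hγ : 0 < γ) :
    ∃ C : ℝ, 0 < C ∧
      ∀ (P : Set (Fin k → ℝ)), IsOpen P → Bornology.IsBounded P →
      ∀ z : (Fin k → ℝ) × ℝ → ℝ, Measurable z →
      (∀ p' ∈ P, ContDiffOn ℝ 2 (fun t => z (p', t)) (Ioo 0 H)) →
      IntegrableOn (fun x => (deriv (fun t => z (x.1, t)) x.2) ^ 2 * x.2 ^ α)
        (P ×ˢ Ioo 0 H) →
      IntegrableOn (fun x => (deriv (deriv (fun t => z (x.1, t))) x.2) ^ 2 * x.2 ^ α)
        (P ×ˢ Ioo 0 H) →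
      ((∀ t ∈ Ioo 0 H,
          ∫⁻ p' in P, ENNReal.ofReal (t ^ α * (deriv (fun s => z (p', s)) t) ^ 2)
            ≤ ENNReal.ofReal (C *
                ((∫ x in P ×ˢ Ioo 0 H, (deriv (fun s => z (x.1, s)) x.2) ^ 2 * x.2 ^ α)
                  + ∫ x in P ×ˢ Ioo 0 H,
                      (deriv (deriv (fun s => z (x.1, s))) x.2) ^ 2 * x.2 ^ α))) ∧
        Tendsto (fun t : ℝ => ∫ p' in P, |deriv (fun s => z (p', s)) t| * t ^ α)
          (nhdsWithin 0 (Ioi 0)) (nhds 0)) :=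
  weighted_trace_inequality_general k H α hH hα
end
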